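/- List Scheduling is value-monotone: for any m ≥ 2 and input sequences x, y of the same length n with x_i ≥ y_i for all i, the maximum bin sum of LS(x, m) is at least the maximum bin sum of LS(y, m), and the minimum bin sum of LS(x, m) is at least the minimum bin sum of LS(y, m). -/

import Mathlib

/-
Carry a stronger invariant through the run: the bin sums `s` for the larger inputs dominate the
bin sums `t` for the smaller ones, `t i ≤ s (π i)` for some permutation `π`. When LS puts `b ≤ a`
into bins `i₀` of `t` and `j₀` of `s`, re-match `i₀` with `j₀` and the old partner `k = π⁻¹ j₀`
of `j₀` with `π i₀`. This works because `i₀` is a minimal bin of `t`, so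
`t i₀ + b ≤ t k + a ≤ s j₀ + a`, and `j₀` is a minimal bin of `s`, so `t k ≤ s j₀ ≤ s (π i₀)`.
Domination under a permutation bounds both the maximum and the minimum.
-/

open scoped Classical

/-- The bin chosen by List Scheduling: the smallest-index bin with minimal current sum. -/
noncomputable def lsIndex {m : ℕ} (hm : 0 < m) (v : Fin m → ℝ) : Fin m :=
  (Finset.univ.filter fun i => ∀ j, v i ≤ v j).min' (by
    obtain ⟨i, -, hi⟩ := Finset.exists_min_image Finset.univ v ⟨⟨0, hm⟩, Finset.mem_univ _⟩
    exact ⟨i, Finset.mem_filter.mpr ⟨Finset.mem_univ _, fun j => hi j (Finset.mem_univ _)⟩⟩)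

/-- One step of List Scheduling: place `x` into the chosen bin. -/
noncomputable def lsStep {m : ℕ} (hm : 0 < m) (v : Fin m → ℝ) (x : ℝ) : Fin m → ℝ :=
  Function.update v (lsIndex hm v) (v (lsIndex hm v) + x)

/-- The vector of bin sums after List Scheduling processes the list `xs` into `m` bins. -/
noncomputable def lsSums {m : ℕ} (hm : 0 < m) (xs : List ℝ) : Fin m → ℝ :=
  xs.foldl (lsStep hm) (fun _ => 0)

/-- `s` dominates `t` iff some permutation `π` satisfies `s (π i) ≥ t i` for all `i`. -/
def Dominates {m : ℕ} (s t : Fin m → ℝ) : Prop :=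
  ∃ π : Equiv.Perm (Fin m), ∀ i, t i ≤ s (π i)

section ListScheduling

variable {m : ℕ} (hm : 0 < m)

theorem lsIndex_le (v : Fin m → ℝ) (j : Fin m) : v (lsIndex hm v) ≤ v j :=
  (Finset.mem_filter.mp (Finset.min'_mem _ _ : lsIndex hm v ∈ _)).2 j

theorem lsStep_apply_lsIndex (v : Fin m → ℝ) (x : ℝ) :
    lsStep hm v x (lsIndex hm v) = v (lsIndex hm v) + x :=
  Function.update_self _ _ _

theorem lsStep_apply_of_ne {v : Fin m → ℝ} (x : ℝ) {i : Fin m} (hi : i ≠ lsIndex hm v) :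
    lsStep hm v x i = v i :=
  Function.update_of_ne hi _ _

theorem le_lsStep (v : Fin m → ℝ) {x : ℝ} (hx : 0 ≤ x) (i : Fin m) : v i ≤ lsStep hm v x i := by
  rcases eq_or_ne i (lsIndex hm v) with rfl | hi
  · rw [lsStep_apply_lsIndex]; linarith
  · rw [lsStep_apply_of_ne hm x hi]

end ListScheduling

namespace Dominates

variable {m : ℕ} {s t : Fin m → ℝ}

theorem refl (s : Fin m → ℝ) : Dominates s s :=
  ⟨1, fun _ => le_rfl⟩

theorem sup'_le (h : Dominates s t) (hne : (Finset.univ : Finset (Fin m)).Nonempty) :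
    Finset.univ.sup' hne t ≤ Finset.univ.sup' hne s := by
  obtain ⟨π, hπ⟩ := h
  exact Finset.sup'_le _ _ fun i _ => (hπ i).trans (Finset.le_sup' s (Finset.mem_univ _))

theorem inf'_le (h : Dominates s t) (hne : (Finset.univ : Finset (Fin m)).Nonempty) :
    Finset.univ.inf' hne t ≤ Finset.univ.inf' hne s := by
  obtain ⟨π, hπ⟩ := h
  refine Finset.le_inf' _ _ fun i _ => ?_
  calc Finset.univ.inf' hne t ≤ t (π.symm i) := Finset.inf'_le t (Finset.mem_univ _)
    _ ≤ s i := by simpa using hπ (π.symm i)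

theorem lsStep (hm : 0 < m) (h : Dominates s t) {a b : ℝ} (ha : 0 ≤ a) (hba : b ≤ a) :
    Dominates (lsStep hm s a) (lsStep hm t b) := by
  obtain ⟨π, hπ⟩ := h
  set i₀ := lsIndex hm t
  set j₀ := lsIndex hm s
  set k := π.symm j₀
  have hπk : π k = j₀ := π.apply_symm_apply j₀
  refine ⟨(Equiv.swap i₀ k).trans π, fun i => ?_⟩
  rw [Equiv.trans_apply]
  rcases eq_or_ne i i₀ with rfl | hi
  · rw [Equiv.swap_apply_left, hπk, lsStep_apply_lsIndex, lsStep_apply_lsIndex]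
    have : t i₀ ≤ s j₀ := (lsIndex_le hm t k).trans (hπk ▸ hπ k)
    linarith
  rw [lsStep_apply_of_ne hm b hi]
  rcases eq_or_ne i k with rfl | hik
  · rw [Equiv.swap_apply_right]
    calc t k ≤ s j₀ := hπk ▸ hπ k
      _ ≤ s (π i₀) := lsIndex_le hm s _
      _ ≤ _ := le_lsStep hm s ha _
  · rw [Equiv.swap_apply_of_ne_of_ne hi hik]
    exact (hπ i).trans (le_lsStep hm s ha _)

theorem foldl_lsStep (hm : 0 < m) {xs ys : List ℝ}
    (hxy : List.Forall₂ (fun a b => 0 ≤ a ∧ b ≤ a) xs ys) (h : Dominates s t) :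
    Dominates (xs.foldl (_root_.lsStep hm) s) (ys.foldl (_root_.lsStep hm) t) := by
  induction hxy generalizing s t with
  | nil => exact h
  | cons hab _ ih => exact ih (h.lsStep hm hab.1 hab.2)

end Dominates

theorem lsSums_dominates {m n : ℕ} (hm : 0 < m) {x y : Fin n → ℝ}
    (hx : ∀ i, 0 ≤ x i) (hxy : ∀ i, y i ≤ x i) :
    Dominates (lsSums hm (List.ofFn x)) (lsSums hm (List.ofFn y)) := by
  refine Dominates.foldl_lsStep hm ?_ (Dominates.refl _)
  rw [List.forall₂_iff_get]
  refine ⟨by simp, fun i _ _ => ?_⟩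
  simpa using ⟨hx _, hxy _⟩

/-- List Scheduling is value-monotone: if every input weakly increases, then both the
maximum bin sum and the minimum bin sum of the LS output weakly increase. -/
theorem ls_value_monotone {m n : ℕ} (hm : 2 ≤ m) (x y : Fin n → ℝ)
    (hpos : ∀ i, 0 < y i) (hxy : ∀ i, y i ≤ x i)
    (hne : (Finset.univ : Finset (Fin m)).Nonempty := ⟨⟨0, by omega⟩, Finset.mem_univ _⟩) :
    Finset.univ.sup' hne (lsSums (by omega : 0 < m) (List.ofFn y)) ≤
      Finset.univ.sup' hne (lsSums (by omega : 0 < m) (List.ofFn x)) ∧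
    Finset.univ.inf' hne (lsSums (by omega : 0 < m) (List.ofFn y)) ≤
      Finset.univ.inf' hne (lsSums (by omega : 0 < m) (List.ofFn x)) := by
  have hdom := lsSums_dominates (m := m) (by omega) (fun i => (hpos i).le.trans (hxy i)) hxy
  exact ⟨hdom.sup'_le hne, hdom.inf'_le hne⟩
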